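/- For every ε ∈ ℝ, the reparameterized Contrastive DPH loss g(r_Δ) = -(1-ε)·log σ(r_Δ) - ε·log σ(-r_Δ) is differentiable on ℝ with derivative g'(r_Δ) = ε - 1/(e^{r_Δ} + 1); and for every ε with 0 < ε ≤ 1/2, g'(r_Δ) = 0 holds exactly when r_Δ = log((1-ε)/ε). -/

import Mathlib

noncomputable def sigmoid (x : ℝ) : ℝ := 1 / (1 + Real.exp (-x))

noncomputable def gcon (ε rΔ : ℝ) : ℝ :=
  -(1 - ε) * Real.log (sigmoid rΔ) - ε * Real.log (sigmoid (-rΔ))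

lemma gcon_eq (ε : ℝ) : gcon ε = fun r =>
    (1 - ε) * Real.log (1 + Real.exp (-r)) + ε * Real.log (1 + Real.exp r) := by
  funext r
  have h1 : (0:ℝ) < 1 + Real.exp (-r) := by positivity
  have h2 : (0:ℝ) < 1 + Real.exp r := by positivity
  simp only [gcon, sigmoid, Real.log_div one_ne_zero (ne_of_gt h1),
    Real.log_div one_ne_zero (ne_of_gt h2), Real.log_one, neg_neg]
  ring

/-- For every `ε`, the reparameterized Contrastive DPH loss `g` is differentiable with derivative
`g'(r_Δ) = ε - 1/(e^{r_Δ}+1)`; and for `0 < ε ≤ 1/2` this derivative vanishes exactly at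
`r_Δ = log((1-ε)/ε)`. -/
theorem con_dph_margin_deriv (ε : ℝ) :
    (∀ rΔ : ℝ, HasDerivAt (gcon ε) (ε - 1 / (Real.exp rΔ + 1)) rΔ) ∧
    (0 < ε → ε ≤ 1 / 2 →
      ∀ rΔ : ℝ, ε - 1 / (Real.exp rΔ + 1) = 0 ↔ rΔ = Real.log ((1 - ε) / ε)) := by
  constructor
  · intro r
    rw [gcon_eq]
    have h1 : (0:ℝ) < 1 + Real.exp (-r) := by positivity
    have h2 : (0:ℝ) < 1 + Real.exp r := by positivity
    have d1 : HasDerivAt (fun r : ℝ => 1 + Real.exp (-r)) (-Real.exp (-r)) r := by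
      have := ((Real.hasDerivAt_exp (-r)).comp r ((hasDerivAt_id r).neg))
      simpa using (this.const_add 1)
    have d2 : HasDerivAt (fun r : ℝ => 1 + Real.exp r) (Real.exp r) r :=
      (Real.hasDerivAt_exp r).const_add 1
    have D1 := (d1.log (ne_of_gt h1)).const_mul (1 - ε)
    have D2 := (d2.log (ne_of_gt h2)).const_mul ε
    have := D1.add D2
    refine this.congr_deriv ?_
    have he : Real.exp (-r) = 1 / Real.exp r := by
      rw [Real.exp_neg]; exact (inv_eq_one_div _)
    rw [he] at h1 ⊢
    field_simp
    ring
  · intro hε hε2 r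
    have hexp : (0:ℝ) < Real.exp r + 1 := by positivity
    have h1ε : (0:ℝ) < 1 - ε := by linarith
    constructor
    · intro h
      have : Real.exp r = (1 - ε) / ε := by
        field_simp at h
        field_simp
        linarith [h]
      rw [← this, Real.log_exp]
    · intro h
      subst h
      rw [Real.exp_log (by positivity)]
      field_simp
      ring
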